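/- For every ε ∈ (1/2, 1), the Gillis random walk admits a stationary probability distribution, given explicitly by the symmetric sequence π with π_0 = (2ε−1)/(2ε), π_j = π_{−j} = π_0 · j (1−ε)_{j−1} / (1+ε)_j for j ≥ 1. That is: Σ_{j∈ℤ} π_j = 1 and π_j = R(j−1) π_{j−1} + L(j+1) π_{j+1} for every j ∈ ℤ. -/

import Mathlib

/-- Probability of a right step in the Gillis walk. -/
noncomputable def gR (ε : ℝ) (j : ℤ) : ℝ :=
  if j = 0 then 1 / 2 else (1 - ε / (j : ℝ)) / 2

/-- Probability of a left step in the Gillis walk. -/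
noncomputable def gL (ε : ℝ) (j : ℤ) : ℝ :=
  if j = 0 then 1 / 2 else (1 + ε / (j : ℝ)) / 2

/-- Pochhammer symbol `(x)ₙ = x (x+1) ⋯ (x+n-1)`. -/
noncomputable def poch (x : ℝ) (n : ℕ) : ℝ := ∏ i ∈ Finset.range n, (x + i)

/-- The candidate stationary distribution of the Gillis walk:
`π 0 = (2ε−1)/(2ε)` and `π j = π (−j) = π 0 · |j| (1−ε)_{|j|−1} / (1+ε)_{|j|}`. -/
noncomputable def gPi (ε : ℝ) (j : ℤ) : ℝ :=
  if j = 0 then (2 * ε - 1) / (2 * ε)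
  else (2 * ε - 1) / (2 * ε) *
    ((j.natAbs : ℝ) * poch (1 - ε) (j.natAbs - 1) / poch (1 + ε) j.natAbs)

/-!
The walk is a birth–death chain, so stationarity follows from detailed balance
`π j * R j = π (j + 1) * L (j + 1)`: for `j = n ≥ 0` both sides equal `π 0 / 2 * bₙ` with
`bₙ = (1-ε)ₙ / (1+ε)ₙ`, and negative `j` follow by the symmetry `R (-j) = L j`, `π (-j) = π j`.
Splitting `π (n + 1) = π (n + 1) * (R + L)` the same way gives `π (n + 1) = π 0 / 2 * (bₙ + bₙ₊₁)`,
so `∑ π = π 0 * 2 ∑ bₙ`. Finally `∑ bₙ = ε / (2ε - 1)` is Gauss's summation of `₂F₁(1-ε, 1; 1+ε; 1)`: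
with `uₙ = (n + c - 1) bₙ` one has `(c - a - 1) bₙ = uₙ - uₙ₊₁`, and `uₙ → 0` because `u` is
antitone, nonnegative, and `∑ uₙ / (n + c - 1) = ∑ bₙ` converges while the harmonic series does not.
-/

open Filter Topology Finset

lemma poch_succ (x : ℝ) (n : ℕ) : poch x (n + 1) = poch x n * (x + n) :=
  prod_range_succ _ n

lemma poch_pos {x : ℝ} (hx : 0 < x) (n : ℕ) : 0 < poch x n :=
  prod_pos fun i _ => by positivity

lemma poch_nonneg {x : ℝ} (hx : 0 ≤ x) (n : ℕ) : 0 ≤ poch x n :=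
  prod_nonneg fun i _ => by positivity

noncomputable def pochRatio (a c : ℝ) (n : ℕ) : ℝ := poch a n / poch c n

section

variable {a c : ℝ}

@[simp] lemma pochRatio_zero (a c : ℝ) : pochRatio a c 0 = 1 := by
  simp [pochRatio, poch]

lemma pochRatio_succ (a c : ℝ) (n : ℕ) :
    pochRatio a c (n + 1) = pochRatio a c n * ((a + n) / (c + n)) := by
  rw [pochRatio, pochRatio, poch_succ, poch_succ, mul_div_mul_comm]

lemma pochRatio_nonneg (ha : 0 ≤ a) (hc : 0 < c) (n : ℕ) : 0 ≤ pochRatio a c n :=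
  div_nonneg (poch_nonneg ha n) (poch_pos hc n).le

lemma add_mul_pochRatio_succ (hc : 0 < c) (n : ℕ) :
    (n + c) * pochRatio a c (n + 1) = (n + a) * pochRatio a c n := by
  have : (c + n : ℝ) ≠ 0 := by positivity
  rw [pochRatio_succ]
  field_simp
  ring

lemma sub_mul_sum_range_pochRatio (hc : 0 < c) (N : ℕ) :
    (c - a - 1) * ∑ n ∈ range N, pochRatio a c n = (c - 1) - (N + c - 1) * pochRatio a c N := by
  induction N with
  | zero => simp
  | succ N ih =>
    rw [sum_range_succ, mul_add, ih]
    push_cast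
    linear_combination add_mul_pochRatio_succ (a := a) hc N

end

lemma Antitone.tendsto_zero_of_summable_div_add {u : ℕ → ℝ} {a : ℝ} (hu : Antitone u)
    (hu0 : ∀ n, 0 ≤ u n) (ha : 0 < a) (hs : Summable fun n : ℕ => u n / (n + a)) :
    Tendsto u atTop (𝓝 0) := by
  have hlim := tendsto_atTop_ciInf hu ⟨0, by rintro _ ⟨n, rfl⟩; exact hu0 n⟩
  set L := ⨅ n, u n
  obtain hL | hL := (le_ciInf hu0 : 0 ≤ L).eq_or_lt
  · exact hL ▸ hlim
  have harmonic : Summable fun n : ℕ => 1 / |n + a| ^ (1 : ℝ) := by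
    refine (hs.mul_left L⁻¹).of_nonneg_of_le (fun n => by positivity) fun n => ?_
    rw [Real.rpow_one, abs_of_pos (by positivity)]
    calc 1 / (n + a) = L⁻¹ * (L / (n + a)) := by rw [mul_div_assoc', inv_mul_cancel₀ hL.ne']
      _ ≤ L⁻¹ * (u n / (n + a)) := by gcongr; exact hu.le_of_tendsto hlim n
  exact absurd ((Real.summable_one_div_nat_add_rpow a 1).mp harmonic) (lt_irrefl 1)

/-- Gauss's summation `₂F₁(a, 1; c; 1) = (c - 1) / (c - a - 1)`. -/
theorem hasSum_pochRatio {a c : ℝ} (ha : 0 ≤ a) (hac : a + 1 < c) :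
    HasSum (pochRatio a c) ((c - 1) / (c - a - 1)) := by
  have hc : 0 < c := by linarith
  have hca : 0 < c - a - 1 := by linarith
  have hc1 : 0 < c - 1 := by linarith
  have hb := pochRatio_nonneg ha hc
  set u : ℕ → ℝ := fun n => (n + c - 1) * pochRatio a c n
  have hu0 : ∀ n, 0 ≤ u n := fun n => mul_nonneg (by linarith [n.cast_nonneg (α := ℝ)]) (hb n)
  have hsum : ∀ N, ∑ n ∈ range N, pochRatio a c n = ((c - 1) - u N) / (c - a - 1) := fun N => by
    rw [eq_div_iff hca.ne', mul_comm, sub_mul_sum_range_pochRatio hc]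
  have hu_anti : Antitone u := antitone_nat_of_succ_le fun n => by
    have := add_mul_pochRatio_succ (a := a) hc n
    simp only [u]
    push_cast
    nlinarith [mul_nonneg hca.le (hb n)]
  have hsummable : Summable (pochRatio a c) :=
    summable_of_sum_range_le hb fun N => by
      rw [hsum]; exact div_le_div_of_nonneg_right (by linarith [hu0 N]) hca.le
  have hu_lim : Tendsto u atTop (𝓝 0) :=
    hu_anti.tendsto_zero_of_summable_div_add hu0 hc1 <| by
      refine hsummable.congr fun n => ?_
      have := (add_pos_of_nonneg_of_pos n.cast_nonneg hc1).ne'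
      simp only [u]
      field_simp
      ring
  rw [hasSum_iff_tendsto_nat_of_nonneg hb]
  simp_rw [hsum]
  simpa using (hu_lim.const_sub (c - 1)).div_const (c - a - 1)

theorem stationary_of_detailed_balance {α : Type*} [CommRing α] {R L π : ℤ → α}
    (hRL : ∀ j, R j + L j = 1) (hbal : ∀ j, π j * R j = π (j + 1) * L (j + 1)) (j : ℤ) :
    π j = R (j - 1) * π (j - 1) + L (j + 1) * π (j + 1) := by
  have hin := hbal (j - 1)
  rw [sub_add_cancel] at hin
  linear_combination -π j * hRL j + hbal j - hin

lemma gR_add_gL (ε : ℝ) (j : ℤ) : gR ε j + gL ε j = 1 := by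
  unfold gR gL
  split_ifs <;> ring

lemma gR_neg (ε : ℝ) (j : ℤ) : gR ε (-j) = gL ε j := by
  simp only [gR, gL, neg_eq_zero, Int.cast_neg, div_neg, sub_neg_eq_add]

lemma gL_neg (ε : ℝ) (j : ℤ) : gL ε (-j) = gR ε j := by
  rw [← gR_neg, neg_neg]

lemma gPi_neg (ε : ℝ) (j : ℤ) : gPi ε (-j) = gPi ε j := by
  simp [gPi, Int.natAbs_neg]

lemma gPi_natCast_succ (ε : ℝ) (n : ℕ) : gPi ε (n + 1) =
    gPi ε 0 * ((n + 1) * poch (1 - ε) n / poch (1 + ε) (n + 1)) := by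
  rw [gPi, gPi, if_neg (by omega), if_pos rfl, show ((n : ℤ) + 1).natAbs = n + 1 by omega]
  push_cast
  rfl

lemma gPi_mul_gR_natCast (ε : ℝ) (n : ℕ) :
    gPi ε n * gR ε n = gPi ε 0 / 2 * pochRatio (1 - ε) (1 + ε) n := by
  cases n with
  | zero => simp [gR]; ring
  | succ n =>
    have hn : (n : ℝ) + 1 ≠ 0 := by positivity
    have hR : (n + 1) * (1 - ε / (n + 1)) = 1 - ε + n := by field_simp; ring
    rw [Nat.cast_succ, gPi_natCast_succ, gR, if_neg (by omega), pochRatio, poch_succ (1 - ε)]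
    push_cast
    linear_combination gPi ε 0 * poch (1 - ε) n / poch (1 + ε) (n + 1) / 2 * hR

lemma gPi_mul_gL_natCast_succ {ε : ℝ} (hε : -1 < ε) (n : ℕ) :
    gPi ε (n + 1) * gL ε (n + 1) = gPi ε 0 / 2 * pochRatio (1 - ε) (1 + ε) n := by
  have hn : (n : ℝ) + 1 ≠ 0 := by positivity
  have hq := (poch_pos (by linarith : 0 < 1 + ε) n).ne'
  have hq' : 1 + ε + n ≠ 0 := by linarith [n.cast_nonneg (α := ℝ)]
  rw [gPi_natCast_succ, gL, if_neg (by omega), pochRatio, poch_succ]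
  push_cast
  field_simp
  ring

lemma gPi_detailed_balance {ε : ℝ} (hε : -1 < ε) (j : ℤ) :
    gPi ε j * gR ε j = gPi ε (j + 1) * gL ε (j + 1) := by
  cases j with
  | ofNat n => rw [Int.ofNat_eq_natCast, gPi_mul_gR_natCast, gPi_mul_gL_natCast_succ hε]
  | negSucc n =>
    rw [Int.negSucc_eq, show -((n : ℤ) + 1) + 1 = -n by ring, gPi_neg, gPi_neg, gR_neg, gL_neg,
      gPi_mul_gR_natCast, gPi_mul_gL_natCast_succ hε]

lemma gPi_natCast_succ_eq_pochRatio {ε : ℝ} (hε : -1 < ε) (n : ℕ) :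
    gPi ε (n + 1) =
      gPi ε 0 / 2 * (pochRatio (1 - ε) (1 + ε) n + pochRatio (1 - ε) (1 + ε) (n + 1)) := by
  have hR := gPi_mul_gR_natCast ε (n + 1)
  have hL := gPi_mul_gL_natCast_succ hε n
  push_cast at hR
  linear_combination hR + hL - gPi ε (n + 1) * gR_add_gL ε (n + 1)

lemma hasSum_gPi {ε : ℝ} (hε : ε ∈ Set.Ioo (1 / 2 : ℝ) 1) : HasSum (gPi ε) 1 := by
  obtain ⟨h1, h2⟩ := hε
  have hS := hasSum_pochRatio (a := 1 - ε) (c := 1 + ε) (by linarith) (by linarith)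
  rw [show (1 + ε - 1) / (1 + ε - (1 - ε) - 1) = ε / (2 * ε - 1) by ring] at hS
  have hS' := (hasSum_nat_add_iff' 1).mpr hS
  simp only [range_one, sum_singleton, pochRatio_zero] at hS'
  have hpos : HasSum (fun n : ℕ => gPi ε (n + 1))
      (gPi ε 0 / 2 * (ε / (2 * ε - 1) + (ε / (2 * ε - 1) - 1))) := by
    simp_rw [gPi_natCast_succ_eq_pochRatio (by linarith : -1 < ε)]
    exact (hS.add hS').mul_left _
  have hneg : HasSum (fun n : ℕ => gPi ε (-(n + 1)))
      (gPi ε 0 / 2 * (ε / (2 * ε - 1) + (ε / (2 * ε - 1) - 1))) := by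
    simpa only [gPi_neg] using hpos
  convert hpos.of_add_one_of_neg_add_one hneg using 1
  have : 2 * ε - 1 ≠ 0 := by linarith
  simp only [gPi, if_pos]
  field_simp
  ring

/-- For `ε ∈ (1/2, 1)` the Gillis random walk admits the stationary probability
distribution `gPi ε`: it is symmetric, sums to `1`, and is invariant under the walk. -/
theorem gillis_stationary_distribution (ε : ℝ) (hε : ε ∈ Set.Ioo (1 / 2 : ℝ) 1) :
    (∀ j : ℤ, gPi ε j = gPi ε (-j)) ∧
    HasSum (fun j : ℤ => gPi ε j) 1 ∧
    (∀ j : ℤ, gPi ε j = gR ε (j - 1) * gPi ε (j - 1) + gL ε (j + 1) * gPi ε (j + 1)) :=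
  ⟨fun j => (gPi_neg ε j).symm, hasSum_gPi hε,
    stationary_of_detailed_balance (gR_add_gL ε) (gPi_detailed_balance (by linarith [hε.1]))⟩
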